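/- For G = ℤ/pℤ and a representation V = ⊕_{λ=1}^l V_{d_λ} with D_V = p, for every positive integer j coprime to p one has dim C_j − v(j) ≤ −1, with equality when j = p − 1. Here dim C_j = j − ⌊j/p⌋ and v(j) = d − l + sht_V(j). -/
import Mathlib

private lemma divB (p t r : ℕ) (hp : 0 < p) (ht : 1 ≤ t) (hr1 : 1 ≤ r) (hrp : r ≤ p) :
    (t * p - r) / p = t - 1 := by
  have e1 : (t - 1) * p = t * p - 1 * p := Nat.sub_mul t 1 p
  have e2 : 1 * p ≤ t * p := Nat.mul_le_mul_right p ht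
  have h : t * p - r = (p - r) + (t - 1) * p := by omega
  rw [h, Nat.add_mul_div_right _ _ hp, Nat.div_eq_of_lt (by omega)]
  omega

private lemma floor_pair (p k r : ℕ) (hp : p.Prime) (hk1 : 1 ≤ k) (hkp : k < p)
    (hr1 : 1 ≤ r) (hrp : r < p) : k * r / p + k * (p - r) / p + 1 = k := by
  have hpp : 0 < p := hp.pos
  have hnd : ¬ p ∣ k * r := by
    rw [hp.dvd_mul]
    rintro (h | h) <;> exact absurd (Nat.le_of_dvd (by omega) h) (by omega)
  have hmod := Nat.div_add_mod (k * r) p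
  have hcomm : p * (k * r / p) = (k * r / p) * p := Nat.mul_comm _ _
  have hrrpos : 1 ≤ k * r % p := by
    rcases Nat.eq_zero_or_pos (k * r % p) with h | h
    · exact absurd (Nat.dvd_of_mod_eq_zero h) hnd
    · exact h
  have hrrlt : k * r % p < p := Nat.mod_lt _ hpp
  have hkr_lt : k * r < k * p := mul_lt_mul_of_pos_left hrp (by omega)
  have hq_lt : k * r / p < k := by
    by_contra h
    push_neg at h
    have : k * p ≤ (k * r / p) * p := Nat.mul_le_mul_right p h
    omega
  have h1 : k * (p - r) = k * p - k * r := Nat.mul_sub k p r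
  have h2 : (k - k * r / p) * p = k * p - (k * r / p) * p := Nat.sub_mul k (k * r / p) p
  have hsub : k * (p - r) = (k - k * r / p) * p - k * r % p := by omega
  rw [hsub, divB p (k - k * r / p) (k * r % p) hpp (by omega) hrrpos (by omega)]
  omega

/-- For `G = ℤ/pℤ` and a representation `V = ⊕_λ V_{d_λ}` with `D_V = p`, for every
positive integer `j` coprime to `p` one has `dim C_j − v(j) ≤ −1`, with equality for
`j = p − 1`.  Here `dim C_j = j − ⌊j/p⌋`, `sht_V(j) = Σ_λ Σ_{i=1}^{d_λ−1} ⌊ij/p⌋` and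
`v(j) = (d − l) + sht_V(j) = Σ_λ (d_λ − 1) + sht_V(j)`. -/
theorem dim_sub_v_le_neg_one (p : ℕ) (hp : p.Prime) (l : ℕ) (d : Fin l → ℕ)
    (hd1 : ∀ i, 1 ≤ d i) (hdp : ∀ i, d i ≤ p)
    (hDV : ∑ i, d i * (d i - 1) / 2 = p) :
    (∀ j : ℕ, 1 ≤ j → ¬ p ∣ j →
        ((j : ℤ) - (j / p : ℕ))
            - ((∑ i, (d i - 1) : ℕ) + (∑ i, ∑ k ∈ Finset.Icc 1 (d i - 1), k * j / p : ℕ))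
          ≤ -1)
      ∧ (((p - 1 : ℕ) : ℤ) - ((p - 1) / p : ℕ))
            - ((∑ i, (d i - 1) : ℕ)
              + (∑ i, ∑ k ∈ Finset.Icc 1 (d i - 1), k * (p - 1) / p : ℕ))
          = -1 := by
  have hp2 := hp.two_le
  have hpp : 0 < p := hp.pos
  -- Gauss sum over `Icc 1 n`
  have hgauss : ∀ i : Fin l, (∑ k ∈ Finset.Icc 1 (d i - 1), k) = d i * (d i - 1) / 2 := by
    intro i
    have hIcc : Finset.Icc 1 (d i - 1) = Finset.Ico 1 (d i - 1 + 1) := (Finset.Ico_add_one_right_eq_Icc 1 _).symm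
    have h1 : (∑ k ∈ Finset.range (d i - 1 + 1), k) = 0 + ∑ k ∈ Finset.Ico 1 (d i - 1 + 1), k := by
      rw [Finset.range_eq_Ico]
      exact Finset.sum_eq_sum_Ico_succ_bot (by omega) _
    have h2 := Finset.sum_range_id_mul_two (d i - 1 + 1)
    have h3 : (d i - 1 + 1) * (d i - 1 + 1 - 1) = d i * (d i - 1) := by
      have := hd1 i
      have e : d i - 1 + 1 = d i := by omega
      rw [e]
    rw [hIcc]
    omega
  have hsum : (∑ i, ∑ k ∈ Finset.Icc 1 (d i - 1), k) = p := by
    calc (∑ i, ∑ k ∈ Finset.Icc 1 (d i - 1), k) = ∑ i, d i * (d i - 1) / 2 :=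
          Finset.sum_congr rfl fun i _ => hgauss i
      _ = p := hDV
  have hNpos : 1 ≤ ∑ i, (d i - 1) := by
    by_contra h
    push_neg at h
    have hz : ∀ i ∈ Finset.univ, d i - 1 = 0 := by
      intro i _
      have : (∑ i, (d i - 1)) = 0 := by omega
      have := (Finset.sum_eq_zero_iff).mp this i (Finset.mem_univ i)
      exact this
    have : (∑ i, ∑ k ∈ Finset.Icc 1 (d i - 1), k) = 0 := by
      refine Finset.sum_eq_zero fun i _ => ?_
      rw [hz i (Finset.mem_univ i)]
      simp
    omega
  -- fact (b)
  have hb : ∀ r : ℕ, 1 ≤ r → r < p →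
      (∑ i, ∑ k ∈ Finset.Icc 1 (d i - 1), k * r / p)
        + (∑ i, ∑ k ∈ Finset.Icc 1 (d i - 1), k * (p - r) / p)
        + (∑ i, (d i - 1)) = p := by
    intro r h1 h2
    have key : ∀ i : Fin l,
        (∑ k ∈ Finset.Icc 1 (d i - 1), k * r / p)
          + (∑ k ∈ Finset.Icc 1 (d i - 1), k * (p - r) / p) + (d i - 1)
          = ∑ k ∈ Finset.Icc 1 (d i - 1), k := by
      intro i
      have hc : (∑ k ∈ Finset.Icc 1 (d i - 1), (k * r / p + k * (p - r) / p + 1))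
          = ∑ k ∈ Finset.Icc 1 (d i - 1), k := by
        refine Finset.sum_congr rfl fun k hk => ?_
        rw [Finset.mem_Icc] at hk
        have := hdp i
        exact floor_pair p k r hp hk.1 (by omega) h1 h2
      rw [Finset.sum_add_distrib, Finset.sum_add_distrib, Finset.sum_const, smul_eq_mul,
        mul_one, Nat.card_Icc] at hc
      omega
    have e : (∑ i, ((∑ k ∈ Finset.Icc 1 (d i - 1), k * r / p)
          + (∑ k ∈ Finset.Icc 1 (d i - 1), k * (p - r) / p) + (d i - 1))) = p :=
      (Finset.sum_congr rfl fun i _ => key i).trans hsum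
    rw [Finset.sum_add_distrib, Finset.sum_add_distrib] at e
    exact e
  -- fact: sht m < m for 1 ≤ m < p
  have hstrict : ∀ m : ℕ, 1 ≤ m → m < p →
      (∑ i, ∑ k ∈ Finset.Icc 1 (d i - 1), k * m / p) < m := by
    intro m h1 h2
    have keyC : ∀ i : Fin l, ∀ k ∈ Finset.Icc 1 (d i - 1), p * (k * m / p) + 1 ≤ k * m := by
      intro i k hk
      rw [Finset.mem_Icc] at hk
      have hdpi := hdp i
      have hnd : ¬ p ∣ k * m := by
        rw [hp.dvd_mul]
        rintro (h | h) <;> exact absurd (Nat.le_of_dvd (by omega) h) (by omega)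
      have := Nat.div_add_mod (k * m) p
      have : k * m % p ≠ 0 := fun h => hnd (Nat.dvd_of_mod_eq_zero h)
      omega
    have per : ∀ i : Fin l, p * (∑ k ∈ Finset.Icc 1 (d i - 1), k * m / p) + (d i - 1)
        ≤ ∑ k ∈ Finset.Icc 1 (d i - 1), k * m := by
      intro i
      have hc : (∑ k ∈ Finset.Icc 1 (d i - 1), (p * (k * m / p) + 1))
          ≤ ∑ k ∈ Finset.Icc 1 (d i - 1), k * m := Finset.sum_le_sum (keyC i)
      rw [Finset.sum_add_distrib, Finset.sum_const, smul_eq_mul, mul_one, Nat.card_Icc,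
        ← Finset.mul_sum] at hc
      omega
    have h1' : p * (∑ i, ∑ k ∈ Finset.Icc 1 (d i - 1), k * m / p) + (∑ i, (d i - 1))
        ≤ ∑ i, ∑ k ∈ Finset.Icc 1 (d i - 1), k * m := by
      rw [Finset.mul_sum, ← Finset.sum_add_distrib]
      exact Finset.sum_le_sum fun i _ => per i
    have h2' : (∑ i, ∑ k ∈ Finset.Icc 1 (d i - 1), k * m) = p * m := by
      calc (∑ i, ∑ k ∈ Finset.Icc 1 (d i - 1), k * m)
          = ∑ i, (∑ k ∈ Finset.Icc 1 (d i - 1), k) * m :=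
            Finset.sum_congr rfl fun i _ => (Finset.sum_mul _ _ _).symm
        _ = (∑ i, ∑ k ∈ Finset.Icc 1 (d i - 1), k) * m := (Finset.sum_mul _ _ _).symm
        _ = p * m := by rw [hsum, Nat.mul_comm]
    have hlt : p * (∑ i, ∑ k ∈ Finset.Icc 1 (d i - 1), k * m / p) < p * m := by omega
    exact Nat.lt_of_mul_lt_mul_left hlt
  -- base inequality for residues
  have hbase : ∀ r : ℕ, 1 ≤ r → r < p →
      r + 1 ≤ (∑ i, (d i - 1)) + (∑ i, ∑ k ∈ Finset.Icc 1 (d i - 1), k * r / p) := by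
    intro r h1 h2
    have hB := hb r h1 h2
    have hS := hstrict (p - r) (by omega) (by omega)
    omega
  -- periodicity
  have hperiod : ∀ j : ℕ,
      (∑ i, ∑ k ∈ Finset.Icc 1 (d i - 1), k * (j + p) / p)
        = (∑ i, ∑ k ∈ Finset.Icc 1 (d i - 1), k * j / p) + p := by
    intro j
    have per : ∀ i : Fin l, ∀ k ∈ Finset.Icc 1 (d i - 1), k * (j + p) / p = k * j / p + k := by
      intro i k _
      rw [Nat.mul_add, Nat.add_mul_div_right _ _ hpp]
    calc (∑ i, ∑ k ∈ Finset.Icc 1 (d i - 1), k * (j + p) / p)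
        = ∑ i, ∑ k ∈ Finset.Icc 1 (d i - 1), (k * j / p + k) :=
          Finset.sum_congr rfl fun i _ => Finset.sum_congr rfl (per i)
      _ = (∑ i, ∑ k ∈ Finset.Icc 1 (d i - 1), k * j / p)
            + (∑ i, ∑ k ∈ Finset.Icc 1 (d i - 1), k) := by
          rw [← Finset.sum_add_distrib]
          exact Finset.sum_congr rfl fun i _ => Finset.sum_add_distrib
      _ = (∑ i, ∑ k ∈ Finset.Icc 1 (d i - 1), k * j / p) + p := by rw [hsum]
  have hfull : ∀ q r : ℕ,
      (∑ i, ∑ k ∈ Finset.Icc 1 (d i - 1), k * (q * p + r) / p)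
        = (∑ i, ∑ k ∈ Finset.Icc 1 (d i - 1), k * r / p) + q * p := by
    intro q
    induction q with
    | zero => intro r; simp
    | succ n ih =>
        intro r
        have e : (n + 1) * p + r = (n * p + r) + p := by ring
        rw [e, hperiod, ih]
        ring
  constructor
  · intro j hj hpj
    have he : j / p * p + j % p = j := by
      have h1 := Nat.div_add_mod j p
      have h2 : p * (j / p) = j / p * p := Nat.mul_comm _ _
      omega
    have hr1 : 1 ≤ j % p := by
      rcases Nat.eq_zero_or_pos (j % p) with h | h
      · exact absurd (Nat.dvd_of_mod_eq_zero h) hpj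
      · exact h
    have hrp : j % p < p := Nat.mod_lt _ hpp
    have hs' : (∑ i, ∑ k ∈ Finset.Icc 1 (d i - 1), k * j / p)
        = (∑ i, ∑ k ∈ Finset.Icc 1 (d i - 1), k * (j % p) / p) + (j / p) * p := by
      have h := hfull (j / p) (j % p)
      rw [he] at h
      exact h
    have hb' := hbase (j % p) hr1 hrp
    rw [hs']
    generalize hR : j % p = R at *
    generalize hq : j / p = q at *
    generalize hG : q * p = G at *
    omega
  · have h1p : (p - 1) / p = 0 := Nat.div_eq_of_lt (by omega)
    have hbb := hb 1 (by omega) (by omega)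
    have hsht1 : (∑ i, ∑ k ∈ Finset.Icc 1 (d i - 1), k * 1 / p) = 0 := by
      refine Finset.sum_eq_zero fun i _ => Finset.sum_eq_zero fun k hk => ?_
      rw [Finset.mem_Icc] at hk
      have := hdp i
      exact Nat.div_eq_of_lt (by omega)
    rw [hsht1] at hbb
    rw [h1p]
    omega
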